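/- For every integer n ≥ 1 and every predicate D : {0,1,...,n} → {−1,1} with M = deg₂(D), there exists a function p : {0,1}^n → ℝ such that p(x)·D(|x|) > 0 for all x ∈ {0,1}^n, and the Fourier coefficient p̂(S) = 0 for every subset S ⊆ {1,...,n} with M < |S| < n − M. In particular, p has at most 2·Σ_{k=0}^{M} C(n,k) nonzero Fourier coefficients. -/

import Mathlib

/-- Hamming weight of a Boolean vector. -/
def hamW {n : ℕ} (x : Fin n → Bool) : ℕ := (Finset.univ.filter (fun i => x i)).card

/-- The Fourier coefficient `p̂(S) = 2^{-n} ∑_x p(x) (-1)^{∑_{i ∈ S} x_i}`. -/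
noncomputable def fourierCoef {n : ℕ} (p : (Fin n → Bool) → ℝ) (S : Finset (Fin n)) : ℝ :=
  (∑ x : Fin n → Bool, p x * (-1 : ℝ) ^ ((S.filter (fun i => x i)).card)) / 2 ^ n

/-!
For `b ∈ {0, 1}` let `C_b` be the set of flip points `c ≡ b (mod 2)` of `D`, i.e. those with
`D c ≠ D (c + 2)`. The polynomial `D b * ∏_{c ∈ C_b} (c + 1 - k)` has degree at most `M` and
the sign of `D k` at every `k ≡ b (mod 2)`, since its sign changes exactly when `k` passes a
point of `C_b`. With `f_b(x)` this polynomial at `k = |x|`, the function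
`p = (f₀ + f₁) / 2 + (-1)^|x| (f₀ - f₁) / 2` equals `f₀` on even and `f₁` on odd weights.
A polynomial of degree `≤ M` in `|x|` is a combination of conjunctions of at most `M`
coordinates, so its Fourier coefficients vanish above level `M`; multiplying by the parity
`(-1)^|x|` sends the coefficient at `S` to the one at the complement of `S`, so the second
summand has none below level `n - M`.
-/

open Finset

section BooleanCube

variable {n : ℕ}

def flipAt (j : Fin n) (x : Fin n → Bool) : Fin n → Bool := Function.update x j (!x j)

theorem flipAt_involutive (j : Fin n) : Function.Involutive (flipAt j) := by
  intro x
  simp [flipAt]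

theorem prod_flipAt_of_notMem {M : Type*} [CommMonoid M] (g : Bool → M) {T : Finset (Fin n)}
    {j : Fin n} (hj : j ∉ T) (x : Fin n → Bool) :
    ∏ i ∈ T, g (flipAt j x i) = ∏ i ∈ T, g (x i) :=
  prod_congr rfl fun i hi => by rw [flipAt, Function.update_of_ne (ne_of_mem_of_not_mem hi hj)]

theorem prod_flipAt_of_mem {M : Type*} [CommRing M] (g : Bool → M) (hg : ∀ b, g (!b) = -g b)
    {T : Finset (Fin n)} {j : Fin n} (hj : j ∈ T) (x : Fin n → Bool) :
    ∏ i ∈ T, g (flipAt j x i) = -∏ i ∈ T, g (x i) := by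
  rw [← mul_prod_erase T _ hj, ← mul_prod_erase T _ hj,
    prod_flipAt_of_notMem g (notMem_erase j T), flipAt, Function.update_self, hg, neg_mul]

theorem sum_eq_zero_of_flipAt_eq_neg {f : (Fin n → Bool) → ℝ} (j : Fin n)
    (hf : ∀ x, f (flipAt j x) = -f x) : ∑ x, f x = 0 := by
  have h := Equiv.sum_comp (flipAt_involutive j).toPerm f
  simp only [Function.Involutive.coe_toPerm, hf, sum_neg_distrib] at h
  linarith

def walsh (S : Finset (Fin n)) (x : Fin n → Bool) : ℝ := ∏ i ∈ S, if x i then -1 else 1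

theorem neg_one_pow_card_filter_eq_walsh (S : Finset (Fin n)) (x : Fin n → Bool) :
    (-1 : ℝ) ^ (S.filter fun i => x i).card = walsh S x := by
  simp [walsh, prod_ite]

theorem neg_one_pow_hamW_eq_walsh_univ (x : Fin n → Bool) :
    (-1 : ℝ) ^ hamW x = walsh univ x :=
  neg_one_pow_card_filter_eq_walsh univ x

theorem walsh_flipAt_of_mem {S : Finset (Fin n)} {j : Fin n} (hj : j ∈ S) (x : Fin n → Bool) :
    walsh S (flipAt j x) = -walsh S x :=
  prod_flipAt_of_mem (fun b => if b then (-1 : ℝ) else 1) (by simp) hj x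

theorem walsh_flipAt_of_notMem {S : Finset (Fin n)} {j : Fin n} (hj : j ∉ S) (x : Fin n → Bool) :
    walsh S (flipAt j x) = walsh S x :=
  prod_flipAt_of_notMem (fun b => if b then (-1 : ℝ) else 1) hj x

theorem fourierCoef_eq_sum_walsh (p : (Fin n → Bool) → ℝ) (S : Finset (Fin n)) :
    fourierCoef p S = (∑ x, p x * walsh S x) / 2 ^ n := by
  simp only [fourierCoef, neg_one_pow_card_filter_eq_walsh]

theorem fourierCoef_eq_zero_of_flipAt_eq {p : (Fin n → Bool) → ℝ} {S : Finset (Fin n)}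
    {j : Fin n} (hj : j ∈ S) (hp : ∀ x, p (flipAt j x) = p x) : fourierCoef p S = 0 := by
  rw [fourierCoef_eq_sum_walsh, sum_eq_zero_of_flipAt_eq_neg j fun x => ?_, zero_div]
  rw [hp, walsh_flipAt_of_mem hj, mul_neg]

theorem fourierCoef_eq_zero_of_flipAt_eq_neg {p : (Fin n → Bool) → ℝ} {S : Finset (Fin n)}
    {j : Fin n} (hj : j ∉ S) (hp : ∀ x, p (flipAt j x) = -p x) : fourierCoef p S = 0 := by
  rw [fourierCoef_eq_sum_walsh, sum_eq_zero_of_flipAt_eq_neg j fun x => ?_, zero_div]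
  rw [hp, walsh_flipAt_of_notMem hj, neg_mul]

theorem hamW_le (x : Fin n → Bool) : hamW x ≤ n :=
  (card_filter_le _ _).trans_eq (card_fin n)

end BooleanCube

section LowDegree

variable {n : ℕ}

def andMonomial (T : Finset (Fin n)) (x : Fin n → Bool) : ℝ :=
  if ∀ i ∈ T, x i = true then 1 else 0

theorem andMonomial_flipAt_of_notMem {T : Finset (Fin n)} {j : Fin n} (hj : j ∉ T)
    (x : Fin n → Bool) : andMonomial T (flipAt j x) = andMonomial T x := by
  have h : ∀ i ∈ T, flipAt j x i = x i := fun i hi =>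
    Function.update_of_ne (ne_of_mem_of_not_mem hi hj) _ _
  simp only [andMonomial]
  exact if_congr (forall₂_congr fun i hi => by rw [h i hi]) rfl rfl

theorem cast_hamW_mul_andMonomial (T : Finset (Fin n)) (x : Fin n → Bool) :
    (hamW x : ℝ) * andMonomial T x = ∑ i, andMonomial (insert i T) x := by
  simp only [hamW, card_filter, Nat.cast_sum, Nat.cast_ite, Nat.cast_one, Nat.cast_zero, sum_mul,
    andMonomial, ite_zero_mul_ite_zero, mul_one, forall_mem_insert]

def lowDegree (n d : ℕ) : Submodule ℝ ((Fin n → Bool) → ℝ) :=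
  Submodule.span ℝ (andMonomial '' {T | T.card ≤ d})

theorem andMonomial_mem_lowDegree {d : ℕ} {T : Finset (Fin n)} (hT : T.card ≤ d) :
    andMonomial T ∈ lowDegree n d :=
  Submodule.subset_span ⟨T, hT, rfl⟩

theorem lowDegree_mono {d e : ℕ} (h : d ≤ e) : lowDegree n d ≤ lowDegree n e :=
  Submodule.span_mono (Set.image_mono fun _ hT => le_trans hT h)

theorem cast_hamW_mul_mem_lowDegree {d : ℕ} {p : (Fin n → Bool) → ℝ} (hp : p ∈ lowDegree n d) :
    (fun x => (hamW x : ℝ) * p x) ∈ lowDegree n (d + 1) := by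
  have h : lowDegree n d ≤
      (lowDegree n (d + 1)).comap (LinearMap.mulLeft ℝ fun x => (hamW x : ℝ)) := by
    refine Submodule.span_le.mpr (Set.image_subset_iff.mpr fun T hT => ?_)
    have hsum : (fun x => (hamW x : ℝ)) * andMonomial T = ∑ i, andMonomial (insert i T) := by
      ext x
      simp only [Pi.mul_apply, Finset.sum_apply, cast_hamW_mul_andMonomial]
    simp only [Set.mem_preimage, SetLike.mem_coe, Submodule.mem_comap, LinearMap.mulLeft_apply,
      hsum]
    exact Submodule.sum_mem _ fun i _ =>
      andMonomial_mem_lowDegree ((card_insert_le i T).trans (Nat.succ_le_succ hT))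
  exact h hp

theorem prod_sub_hamW_mem_lowDegree {ι : Type*} (A : Finset ι) (a : ι → ℝ) :
    (fun x : Fin n → Bool => ∏ i ∈ A, (a i - hamW x)) ∈ lowDegree n A.card := by
  classical
  induction A using Finset.induction_on with
  | empty =>
    have h : (fun x : Fin n → Bool => ∏ i ∈ (∅ : Finset ι), (a i - hamW x)) = andMonomial ∅ := by
      ext x
      simp [andMonomial]
    exact h ▸ andMonomial_mem_lowDegree le_rfl
  | insert i A hi ih =>
    have h : (fun x : Fin n → Bool => ∏ k ∈ insert i A, (a k - hamW x)) =
        a i • (fun x => ∏ k ∈ A, (a k - hamW x)) -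
          fun x => (hamW x : ℝ) * ∏ k ∈ A, (a k - hamW x) := by
      ext x
      simp only [prod_insert hi, Pi.sub_apply, Pi.smul_apply, smul_eq_mul]
      ring
    rw [h, card_insert_of_notMem hi]
    exact sub_mem (Submodule.smul_mem _ _ (lowDegree_mono A.card.le_succ ih))
      (cast_hamW_mul_mem_lowDegree ih)

end LowDegree

section FourierSupport

variable {n : ℕ}

noncomputable def fourierCoefLinear (S : Finset (Fin n)) : ((Fin n → Bool) → ℝ) →ₗ[ℝ] ℝ where
  toFun p := fourierCoef p S
  map_add' p q := by simp only [fourierCoef, Pi.add_apply, add_mul, sum_add_distrib, add_div]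
  map_smul' c p := by
    simp only [fourierCoef, Pi.smul_apply, smul_eq_mul, mul_assoc, ← mul_sum, mul_div_assoc,
      RingHom.id_apply]

theorem fourierCoefLinear_apply (S : Finset (Fin n)) (p : (Fin n → Bool) → ℝ) :
    fourierCoefLinear S p = fourierCoef p S :=
  rfl

theorem neg_one_pow_hamW_flipAt (j : Fin n) (x : Fin n → Bool) :
    (-1 : ℝ) ^ hamW (flipAt j x) = -(-1) ^ hamW x := by
  simp only [neg_one_pow_hamW_eq_walsh_univ, walsh_flipAt_of_mem (mem_univ j)]

theorem fourierCoef_eq_zero_of_mem_lowDegree {d : ℕ} {p : (Fin n → Bool) → ℝ}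
    (hp : p ∈ lowDegree n d) {S : Finset (Fin n)} (hS : d < S.card) : fourierCoef p S = 0 := by
  have h : lowDegree n d ≤ LinearMap.ker (fourierCoefLinear S) := by
    refine Submodule.span_le.mpr (Set.image_subset_iff.mpr fun T hT => ?_)
    obtain ⟨j, hjS, hjT⟩ := not_subset.mp fun hST => (card_le_card hST).not_gt (hT.trans_lt hS)
    exact fourierCoef_eq_zero_of_flipAt_eq hjS (andMonomial_flipAt_of_notMem hjT)
  exact h hp

theorem fourierCoef_neg_one_pow_hamW_mul_eq_zero {d : ℕ} {p : (Fin n → Bool) → ℝ}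
    (hp : p ∈ lowDegree n d) {S : Finset (Fin n)} (hS : S.card + d < n) :
    fourierCoef (fun x => (-1) ^ hamW x * p x) S = 0 := by
  have h : lowDegree n d ≤ LinearMap.ker
      ((fourierCoefLinear S).comp (LinearMap.mulLeft ℝ fun x => (-1 : ℝ) ^ hamW x)) := by
    refine Submodule.span_le.mpr (Set.image_subset_iff.mpr fun T hT => ?_)
    obtain ⟨j, hj⟩ : (S ∪ T)ᶜ.Nonempty := by
      have hT : T.card ≤ d := hT
      have := card_union_le S T
      rw [← card_pos, card_compl, Fintype.card_fin]
      omega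
    rw [mem_compl, mem_union, not_or] at hj
    refine fourierCoef_eq_zero_of_flipAt_eq_neg hj.1 fun x => ?_
    simp only [LinearMap.mulLeft_apply, Pi.mul_apply, neg_one_pow_hamW_flipAt,
      andMonomial_flipAt_of_notMem hj.2, neg_mul]
  exact h hp

theorem fourierCoef_add_neg_one_pow_hamW_mul_eq_zero {d : ℕ} {q r : (Fin n → Bool) → ℝ}
    (hq : q ∈ lowDegree n d) (hr : r ∈ lowDegree n d) {S : Finset (Fin n)}
    (hdS : d < S.card) (hSd : S.card < n - d) :
    fourierCoef (fun x => q x + (-1) ^ hamW x * r x) S = 0 := by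
  change fourierCoefLinear S (q + fun x => (-1) ^ hamW x * r x) = 0
  rw [map_add, fourierCoefLinear_apply, fourierCoefLinear_apply,
    fourierCoef_eq_zero_of_mem_lowDegree hq hdS,
    fourierCoef_neg_one_pow_hamW_mul_eq_zero hr (by omega), add_zero]

end FourierSupport

section Counting

variable {α : Type*} [Fintype α]

theorem card_filter_card_le_eq_sum_choose (M : ℕ) :
    #{S : Finset α | S.card ≤ M} = ∑ k ∈ range (M + 1), (Fintype.card α).choose k := by
  rw [card_eq_sum_card_fiberwise (f := Finset.card) (t := range (M + 1))
    fun S hS => by simpa [Nat.lt_succ_iff] using hS]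
  refine sum_congr rfl fun k hk => ?_
  have h : ({S ∈ {S : Finset α | S.card ≤ M} | S.card = k} : Finset (Finset α)) =
      powersetCard k univ := by
    ext S
    simp only [mem_filter, mem_univ, true_and, mem_powersetCard_univ, and_iff_right_iff_imp]
    rw [mem_range] at hk
    omega
  rw [h, card_powersetCard, card_univ]

theorem ncard_le_two_mul_sum_choose {M : ℕ} {s : Set (Finset α)}
    (hs : ∀ S ∈ s, S.card ≤ M ∨ Fintype.card α - M ≤ S.card) :
    s.ncard ≤ 2 * ∑ k ∈ range (M + 1), (Fintype.card α).choose k := by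
  classical
  set A : Finset (Finset α) := {S | S.card ≤ M}
  have hsub : s ⊆ ↑(A ∪ A.image compl) := by
    intro S hS
    rcases hs S hS with h | h
    · simp [A, h]
    · refine mem_union_right _ (mem_image.mpr ⟨Sᶜ, ?_, compl_compl S⟩)
      simp only [A, mem_filter, mem_univ, true_and, card_compl]
      omega
  calc s.ncard ≤ (A ∪ A.image compl).card := by
        rw [← Set.ncard_coe_finset]
        exact Set.ncard_le_ncard hsub (finite_toSet _)
    _ ≤ A.card + A.card := (card_union_le _ _).trans (Nat.add_le_add_left card_image_le _)
    _ = 2 * ∑ k ∈ range (M + 1), (Fintype.card α).choose k := by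
        rw [card_filter_card_le_eq_sum_choose, two_mul]

end Counting

section SignPattern

def flipPoly (C : Finset ℕ) (k : ℕ) : ℝ := ∏ c ∈ C, ((c : ℝ) + 1 - k)

theorem flipPoly_pos {C : Finset ℕ} {k : ℕ} (hC : ∀ c ∈ C, k ≤ c) : 0 < flipPoly C k :=
  prod_pos fun c hc => by
    have : (k : ℝ) ≤ c := by exact_mod_cast hC c hc
    linarith

theorem flipPoly_factor_pos {c k : ℕ} (hck : c ≠ k) (hpar : c % 2 = k % 2) :
    0 < ((c : ℝ) + 1 - k) * ((c : ℝ) + 1 - (k + 2 : ℕ)) := by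
  push_cast
  rcases hck.lt_or_gt with h | h
  · have : (c : ℝ) + 2 ≤ k := by exact_mod_cast (show c + 2 ≤ k by omega)
    nlinarith
  · have : (k : ℝ) + 2 ≤ c := by exact_mod_cast (show k + 2 ≤ c by omega)
    nlinarith

theorem flipPoly_mul_flipPoly_add_two_pos {C : Finset ℕ} {k : ℕ}
    (hC : ∀ c ∈ C, c % 2 = k % 2) (hk : k ∉ C) : 0 < flipPoly C k * flipPoly C (k + 2) := by
  rw [flipPoly, flipPoly, ← prod_mul_distrib]
  exact prod_pos fun c hc => flipPoly_factor_pos (ne_of_mem_of_not_mem hc hk) (hC c hc)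

theorem flipPoly_mul_flipPoly_add_two_neg {C : Finset ℕ} {k : ℕ}
    (hC : ∀ c ∈ C, c % 2 = k % 2) (hk : k ∈ C) : flipPoly C k * flipPoly C (k + 2) < 0 := by
  rw [flipPoly, flipPoly, ← prod_mul_distrib, ← mul_prod_erase C _ hk]
  refine mul_neg_of_neg_of_pos (by push_cast; linarith) (prod_pos fun c hc => ?_)
  exact flipPoly_factor_pos (ne_of_mem_erase hc) (hC c (mem_of_mem_erase hc))

variable {n b : ℕ} {D : ℕ → ℤ} {C : Finset ℕ}

theorem flipPoly_sign_step (hD : ∀ i ≤ n, D i = 1 ∨ D i = -1)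
    (hC : ∀ c, c ∈ C ↔ c + 2 ≤ n ∧ D c ≠ D (c + 2) ∧ c % 2 = b)
    {k : ℕ} (hk : k + 2 ≤ n) (hkb : k % 2 = b) :
    0 < ((D k : ℝ) * D (k + 2)) * (flipPoly C k * flipPoly C (k + 2)) := by
  have hpar : ∀ c ∈ C, c % 2 = k % 2 := fun c hc => hkb ▸ ((hC c).mp hc).2.2
  by_cases hkC : k ∈ C
  · have hD' : (D k : ℝ) * D (k + 2) = -1 := by
      have hne := ((hC k).mp hkC).2.1
      rcases hD k (by omega) with h | h <;> rcases hD (k + 2) hk with h' | h' <;>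
        simp_all
    rw [hD']
    linarith [flipPoly_mul_flipPoly_add_two_neg hpar hkC]
  · have hD' : (D k : ℝ) * D (k + 2) = 1 := by
      have heq : D k = D (k + 2) := by
        by_contra hne
        exact hkC ((hC k).mpr ⟨hk, hne, hkb⟩)
      rw [← heq]
      rcases hD k (by omega) with h | h <;> simp [h]
    rw [hD', one_mul]
    exact flipPoly_mul_flipPoly_add_two_pos hpar hkC

theorem flipPoly_sign (hb : b < 2) (hD : ∀ i ≤ n, D i = 1 ∨ D i = -1)
    (hC : ∀ c, c ∈ C ↔ c + 2 ≤ n ∧ D c ≠ D (c + 2) ∧ c % 2 = b)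
    {k : ℕ} (hk : k ≤ n) (hkb : k % 2 = b) : 0 < (D b * flipPoly C k) * D k := by
  have hbD : (D b : ℝ) * D b = 1 := by rcases hD b (by omega) with h | h <;> simp [h]
  obtain ⟨m, rfl⟩ : ∃ m, k = b + 2 * m := ⟨k / 2, by omega⟩
  induction m with
  | zero =>
    have hbC : ∀ c ∈ C, b ≤ c := fun c hc => by have := ((hC c).mp hc).2.2; omega
    rw [Nat.mul_zero, Nat.add_zero, mul_right_comm, hbD, one_mul]
    exact flipPoly_pos hbC
  | succ m ih =>
    set k := b + 2 * m
    rw [show b + 2 * (m + 1) = k + 2 by ring] at hk ⊢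
    have hstep := flipPoly_sign_step hD hC hk (by omega)
    have hprod :
        0 < ((D b * flipPoly C k) * D k) * ((D b * flipPoly C (k + 2)) * D (k + 2)) := by
      calc (0 : ℝ)
          < (D b * D b) * (((D k : ℝ) * D (k + 2)) * (flipPoly C k * flipPoly C (k + 2))) := by
            rwa [hbD, one_mul]
        _ = _ := by ring
    exact pos_of_mul_pos_right hprod (ih (by omega) (by omega)).le

end SignPattern

theorem exists_sign_representation_low_fourier_general (n : ℕ)
    (D : ℕ → ℤ) (hD : ∀ i ≤ n, D i = 1 ∨ D i = -1) :
    ∃ p : (Fin n → Bool) → ℝ,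
      (∀ x : Fin n → Bool, 0 < p x * (D (hamW x) : ℝ)) ∧
      (∀ S : Finset (Fin n),
        ((Finset.range (n - 1)).filter (fun i => D i ≠ D (i + 2))).card < S.card →
        S.card < n - ((Finset.range (n - 1)).filter (fun i => D i ≠ D (i + 2))).card →
        fourierCoef p S = 0) ∧
      {S : Finset (Fin n) | fourierCoef p S ≠ 0}.ncard ≤
        2 * ∑ k ∈ Finset.range
            ((((Finset.range (n - 1)).filter (fun i => D i ≠ D (i + 2))).card) + 1),
          n.choose k := by
  set F := (Finset.range (n - 1)).filter (fun i => D i ≠ D (i + 2))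
  let f (b : ℕ) (x : Fin n → Bool) : ℝ := D b * flipPoly {c ∈ F | c % 2 = b} (hamW x)
  have hf (b : ℕ) : f b ∈ lowDegree n F.card :=
    lowDegree_mono (card_filter_le _ _) (Submodule.smul_mem _ (D b : ℝ)
      (prod_sub_hamW_mem_lowDegree _ fun c : ℕ => (c : ℝ) + 1))
  let p (x : Fin n → Bool) : ℝ :=
    (2⁻¹ : ℝ) * (f 0 x + f 1 x) + (-1) ^ hamW x * ((2⁻¹ : ℝ) * (f 0 x - f 1 x))
  have hvanish (S : Finset (Fin n)) (h₁ : F.card < S.card) (h₂ : S.card < n - F.card) :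
      fourierCoef p S = 0 :=
    fourierCoef_add_neg_one_pow_hamW_mul_eq_zero (q := (2⁻¹ : ℝ) • (f 0 + f 1))
      (r := (2⁻¹ : ℝ) • (f 0 - f 1)) (Submodule.smul_mem _ _ (add_mem (hf 0) (hf 1)))
      (Submodule.smul_mem _ _ (sub_mem (hf 0) (hf 1))) h₁ h₂
  refine ⟨p, fun x => ?_, hvanish, ?_⟩
  · have hpx : p x = f (hamW x % 2) x := by
      rcases Nat.mod_two_eq_zero_or_one (hamW x) with h | h <;>
        simp only [p, neg_one_pow_eq_pow_mod_two (hamW x), h] <;> ring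
    rw [hpx]
    refine flipPoly_sign (Nat.mod_lt _ two_pos) hD (fun c => ?_) (hamW_le x) rfl
    simp only [F, mem_filter, mem_range]
    omega
  · have hcount := ncard_le_two_mul_sum_choose (M := F.card)
      (s := {S : Finset (Fin n) | fourierCoef p S ≠ 0}) fun S hS => by
        by_contra! h
        exact hS (hvanish S h.1 (by simpa using h.2))
    rwa [Fintype.card_fin] at hcount

/-- With `M = deg₂(D)`, there is `p : {0,1}^n → ℝ` sign-representing
`D(|x|)` whose Fourier coefficients vanish on all sets `S` with
`M < |S| < n − M`; in particular `p` has at most `2 ∑_{k=0}^{M} C(n,k)`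
nonzero Fourier coefficients. -/
theorem exists_sign_representation_low_fourier (n : ℕ) (hn : 1 ≤ n)
    (D : ℕ → ℤ) (hD : ∀ i ≤ n, D i = 1 ∨ D i = -1) :
    ∃ p : (Fin n → Bool) → ℝ,
      (∀ x : Fin n → Bool, 0 < p x * (D (hamW x) : ℝ)) ∧
      (∀ S : Finset (Fin n),
        ((Finset.range (n - 1)).filter (fun i => D i ≠ D (i + 2))).card < S.card →
        S.card < n - ((Finset.range (n - 1)).filter (fun i => D i ≠ D (i + 2))).card →
        fourierCoef p S = 0) ∧
      {S : Finset (Fin n) | fourierCoef p S ≠ 0}.ncard ≤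
        2 * ∑ k ∈ Finset.range
            ((((Finset.range (n - 1)).filter (fun i => D i ≠ D (i + 2))).card) + 1),
          n.choose k :=
  exists_sign_representation_low_fourier_general n D hD
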